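/- Let (Γ, ω) be a finite measure space of S-Lipschitz curves γ : [0,T] → ℝ^d such that for each t, the pushforward of ω under the evaluation map γ ↦ γ(t) is absolutely continuous with respect to Lebesgue measure on ℝ^d with density bounded by 1. If E ⊂ [0,T] × ℝ^d has H^d-measure zero, then ω({γ : ∃ t ∈ [0,T] with (t, γ(t)) ∈ E}) = 0. -/

import Mathlib

open MeasureTheory Set

theorem stmt_5 (S T : ℝ) (hS : 0 < S) (hT : 0 ≤ T) (d : ℕ)
    {Γ : Type*} [MeasurableSpace Γ] (ω : Measure Γ) [IsFiniteMeasure ω]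
    (X : Γ → ℝ → EuclideanSpace ℝ (Fin d))
    (hlip : ∀ γ, LipschitzOnWith (Real.toNNReal S) (X γ) (Set.Icc 0 T))
    (hmeas : ∀ t, Measurable (fun γ => X γ t))
    (hpush : ∀ t ∈ Set.Icc (0:ℝ) T, Measure.map (fun γ => X γ t) ω ≤ volume)
    (E : Set (ℝ × EuclideanSpace ℝ (Fin d)))
    (hE : MeasureTheory.Measure.hausdorffMeasure d E = 0) :
    ω {γ | ∃ t ∈ Set.Icc (0:ℝ) T, (t, X γ t) ∈ E} = 0 := by
  classical
  set A := {γ | ∃ t ∈ Set.Icc (0:ℝ) T, (t, X γ t) ∈ E} with hA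
  set vB := volume (Metric.closedBall (0 : EuclideanSpace ℝ (Fin d)) 1) with hvB
  set c : ENNReal := ENNReal.ofReal ((S+1)^d) * vB with hc
  have hvBtop : vB ≠ ⊤ := (measure_closedBall_lt_top).ne
  have hctop : c ≠ ⊤ := ENNReal.mul_ne_top ENNReal.ofReal_ne_top hvBtop
  -- the infimum over covers (with diam ≤ 1) is 0
  have hinf : (⨅ (t : ℕ → Set (ℝ × EuclideanSpace ℝ (Fin d))) (_ : E ⊆ ⋃ n, t n)
      (_ : ∀ n, EMetric.diam (t n) ≤ 1),
      ∑' n, ⨆ _ : (t n).Nonempty, EMetric.diam (t n) ^ (d:ℝ)) = 0 := by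
    refine le_antisymm ?_ zero_le
    rw [← hE, Measure.hausdorffMeasure_apply]
    exact le_iSup_of_le 1 (le_iSup_of_le one_pos le_rfl)
  -- main estimate
  have key : ∀ δ : ENNReal, 0 < δ → ω A ≤ δ := by
    intro δ hδ
    have hε : 0 < δ / c := ENNReal.div_pos hδ.ne' hctop
    have hlt : (⨅ (t : ℕ → Set (ℝ × EuclideanSpace ℝ (Fin d))) (_ : E ⊆ ⋃ n, t n)
        (_ : ∀ n, EMetric.diam (t n) ≤ 1),
        ∑' n, ⨆ _ : (t n).Nonempty, EMetric.diam (t n) ^ (d:ℝ)) < δ / c := by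
      rw [hinf]; exact hε
    simp only [iInf_lt_iff] at hlt
    obtain ⟨F, hcov, hdiam, hsum⟩ := hlt
    -- pick points
    have hFd : ∀ n, EMetric.diam (F n) ≠ ⊤ := fun n => ((hdiam n).trans_lt ENNReal.one_lt_top).ne
    set p : ℕ → ℝ × EuclideanSpace ℝ (Fin d) :=
      fun n => if h : (F n).Nonempty then h.choose else (0, 0) with hp
    have hpF : ∀ n, (F n).Nonempty → p n ∈ F n := by
      intro n h; simp only [hp, dif_pos h]; exact h.choose_spec
    set u : ℕ → ℝ := fun n => max 0 (min (p n).1 T) with hu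
    have hu_mem : ∀ n, u n ∈ Set.Icc (0:ℝ) T := fun n =>
      ⟨le_max_left _ _, max_le hT (min_le_right _ _)⟩
    set r : ℕ → ℝ := fun n => (EMetric.diam (F n)).toReal with hr
    have hr0 : ∀ n, 0 ≤ r n := fun n => ENNReal.toReal_nonneg
    set C : ℕ → Set Γ := fun n => if (F n).Nonempty then
      (fun γ => X γ (u n)) ⁻¹' Metric.closedBall (p n).2 ((S+1) * r n) else ∅ with hC
    -- A ⊆ ⋃ C n
    have hsub : A ⊆ ⋃ n, C n := by
      rintro γ ⟨t, htI, htE⟩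
      obtain ⟨n, hn⟩ := mem_iUnion.1 (hcov htE)
      have hne : (F n).Nonempty := ⟨_, hn⟩
      refine mem_iUnion.2 ⟨n, ?_⟩
      rw [hC]; simp only [if_pos hne]
      have hpn := hpF n hne
      have hd : dist (t, X γ t) (p n) ≤ r n := by
        have := EMetric.edist_le_diam_of_mem hn hpn
        rw [dist_edist]
        exact ENNReal.toReal_mono (hFd n) this
      rw [Prod.dist_eq, max_le_iff] at hd
      obtain ⟨hd1, hd2⟩ := hd
      have htu : dist t (u n) ≤ r n := by
        rw [Real.dist_eq] at hd1 ⊢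
        simp only [hu]
        rcases le_total (p n).1 0 with h0 | h0
        · have : min (p n).1 T = (p n).1 := min_eq_left (h0.trans hT)
          rw [this, max_eq_left h0]
          rw [abs_le] at hd1 ⊢
          constructor <;> [skip; skip] <;> cases' hd1 with a b <;>
            simp only [sub_zero] <;> nlinarith [htI.1, htI.2]
        · rcases le_total T (p n).1 with h1 | h1
          · rw [min_eq_right h1, max_eq_right hT]
            rw [abs_le] at hd1 ⊢
            constructor <;> nlinarith [htI.1, htI.2, hd1.1, hd1.2]
          · rw [min_eq_left h1, max_eq_right h0]
            exact hd1
      have hXd : dist (X γ (u n)) (p n).2 ≤ (S+1) * r n := by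
        have hL : dist (X γ (u n)) (X γ t) ≤ S * (r n) := by
          have := (hlip γ).dist_le_mul _ (hu_mem n) _ htI
          rw [Real.coe_toNNReal S hS.le] at this
          calc dist (X γ (u n)) (X γ t) ≤ S * dist (u n) t := this
            _ ≤ S * r n := by
                rw [dist_comm] at htu
                exact mul_le_mul_of_nonneg_left htu hS.le
        calc dist (X γ (u n)) (p n).2 ≤ dist (X γ (u n)) (X γ t) + dist (X γ t) (p n).2 :=
              dist_triangle _ _ _
          _ ≤ S * r n + r n := add_le_add hL hd2
          _ = (S+1) * r n := by ring
      exact Metric.mem_closedBall.2 hXd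
    -- measure of each C n
    have hCn : ∀ n, ω (C n) ≤ c * ⨆ _ : (F n).Nonempty, EMetric.diam (F n) ^ (d:ℝ) := by
      intro n
      rw [hC]
      by_cases hne : (F n).Nonempty
      · simp only [if_pos hne, iSup_pos hne]
        have step1 : ω ((fun γ => X γ (u n)) ⁻¹' Metric.closedBall (p n).2 ((S+1) * r n))
            ≤ volume (Metric.closedBall (p n).2 ((S+1) * r n)) := by
          rw [← Measure.map_apply (hmeas (u n)) measurableSet_closedBall]
          exact Measure.le_iff'.1 (hpush (u n) (hu_mem n)) _
        refine step1.trans ?_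
        rw [Measure.addHaar_closedBall' _ _ (by positivity : (0:ℝ) ≤ (S+1) * r n),
          finrank_euclideanSpace_fin]
        rw [mul_pow, ENNReal.ofReal_mul (by positivity)]
        have : ENNReal.ofReal (r n ^ d) = EMetric.diam (F n) ^ (d:ℝ) := by
          rw [ENNReal.rpow_natCast, hr, ← ENNReal.toReal_pow,
            ENNReal.ofReal_toReal (ENNReal.pow_ne_top (hFd n))]
        rw [this, hc]
        ring_nf
        exact le_of_eq (by ring)
      · simp only [if_neg hne, measure_empty]
        exact zero_le
    calc ω A ≤ ω (⋃ n, C n) := measure_mono hsub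
      _ ≤ ∑' n, ω (C n) := measure_iUnion_le _
      _ ≤ ∑' n, c * ⨆ _ : (F n).Nonempty, EMetric.diam (F n) ^ (d:ℝ) :=
          ENNReal.tsum_le_tsum hCn
      _ = c * ∑' n, ⨆ _ : (F n).Nonempty, EMetric.diam (F n) ^ (d:ℝ) :=
          ENNReal.tsum_mul_left
      _ ≤ c * (δ / c) := mul_le_mul_right hsum.le _
      _ ≤ δ := ENNReal.mul_div_le
  refine le_antisymm ?_ zero_le
  refine ENNReal.le_of_forall_pos_le_add fun ε hε _ => ?_
  simpa using key ε (by exact_mod_cast hε)
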